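/- arXiv:1910.02885 — 2 statements merged into one kernel-verified Lean document; each statement's English description precedes it below -/
import Mathlib

section
/- Let $x \geq 2$ and $2 \leq \lambda < 3$. For a positive integer $n \leq x^{\lambda}$, define $w(n) = 1 - \frac{1}{3-\lambda}\sum_{p \mid n,\ p < x} w_p(n)$, where for a prime $p$ dividing $n$: $w_p(n) = 1 - \frac{\log p}{\log x}$ if $p$ is the least prime factor of $n$, $w_p(n) = \frac{\log p_n}{\log x}$ (with $p_n$ the least prime factor of $n$) if $p > p_n$ and $p < x^{1/2}$, and $w_p(n) = 1 - \frac{\log p}{\log x}$ if $p > p_n$ and $p \geq x^{1/2}$. If $n$ is squarefree, $n \leq x^\lambda$, and $w(n) > 0$, then $n$ has at most 2 distinct prime factors. -/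
/-! Let `p₀` be the least prime factor of `n`. If some other prime factor `q` lies below `√x`,
the weights of `p₀` and `q` already add up to `1 ≥ 3 - λ`. Otherwise every prime factor `p`
has weight at least `1 - log p / log x` (for `p ≥ x` the weight is `0` and this bound is
nonpositive), so the total weight is at least
`ω(n) - log n / log x ≥ ω(n) - λ`. Either way `w(n) > 0` forces `ω(n) < 3`. -/

open Real

namespace Richert

/-- The summand `w_p(n)` with `m = p_n`, extended by `0` to primes `p ≥ x`, so that the
sum over `p ∣ n, p < x` becomes a sum over all prime factors of `n`. -/
noncomputable def weightTerm (x : ℝ) (m p : ℕ) : ℝ :=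
  if (p : ℝ) < x then
    if p = m then 1 - log p / log x
    else if (p : ℝ) < x ^ ((1 : ℝ) / 2) then log m / log x
    else 1 - log p / log x
  else 0

variable {x : ℝ}

lemma one_sub_log_div_nonneg (hx : 1 < x) {p : ℕ} (hp : (p : ℝ) < x) :
    0 ≤ 1 - log p / log x := by
  have hlog : log p ≤ log x := by
    rcases p.eq_zero_or_pos with rfl | hp0
    · simpa using (log_pos hx).le
    · exact log_le_log (by exact_mod_cast hp0) hp.le
  have : log p / log x ≤ 1 := (div_le_one (log_pos hx)).mpr hlog
  linarith

lemma weightTerm_nonneg (hx : 1 < x) (m p : ℕ) : 0 ≤ weightTerm x m p := by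
  unfold weightTerm
  split_ifs with hpx
  · exact one_sub_log_div_nonneg hx hpx
  · exact div_nonneg (log_natCast_nonneg m) (log_pos hx).le
  · exact one_sub_log_div_nonneg hx hpx
  · exact le_rfl

lemma one_sub_log_div_le_weightTerm (hx : 1 < x) {m p : ℕ}
    (hp : p = m ∨ x ^ ((1 : ℝ) / 2) ≤ p) : 1 - log p / log x ≤ weightTerm x m p := by
  unfold weightTerm
  split_ifs with hpx hpm hsmall
  · exact le_rfl
  · exact absurd hsmall (hp.resolve_left hpm).not_gt
  · exact le_rfl
  · have hlog : log x ≤ log p := log_le_log (by linarith) (not_lt.mp hpx)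
    have : 1 ≤ log p / log x := (one_le_div (log_pos hx)).mpr hlog
    linarith

lemma weightTerm_of_lt_sqrt (hx : 1 ≤ x) {m p : ℕ} (hpm : p ≠ m)
    (hp : (p : ℝ) < x ^ ((1 : ℝ) / 2)) : weightTerm x m p = log m / log x := by
  have hpx : (p : ℝ) < x :=
    hp.trans_le (by simpa using rpow_le_rpow_of_exponent_le hx (by norm_num : (1 : ℝ) / 2 ≤ 1))
  simp only [weightTerm, if_pos hpx, if_neg hpm, if_pos hp]

lemma sum_log_primeFactors_le_log (n : ℕ) : ∑ p ∈ n.primeFactors, log p ≤ log n := by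
  rcases n.eq_zero_or_pos with rfl | hn
  · simp
  have hprod_pos : 0 < ∏ p ∈ n.primeFactors, p :=
    Finset.prod_pos fun p hp => (Nat.prime_of_mem_primeFactors hp).pos
  calc ∑ p ∈ n.primeFactors, log p = log (∏ p ∈ n.primeFactors, p : ℕ) := by
        push_cast
        refine (log_prod fun p hp => ?_).symm
        exact_mod_cast (Nat.prime_of_mem_primeFactors hp).ne_zero
    _ ≤ log n := log_le_log (by exact_mod_cast hprod_pos)
        (by exact_mod_cast Nat.le_of_dvd hn (Nat.prod_primeFactors_dvd n))

lemma one_le_sum_weightTerm_of_lt_sqrt (hx : 1 < x) {n q : ℕ} (hq : q ∈ n.primeFactors)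
    (hqm : q ≠ n.minFac) (hqx : (q : ℝ) < x ^ ((1 : ℝ) / 2)) :
    1 ≤ ∑ p ∈ n.primeFactors, weightTerm x n.minFac p := by
  have hn1 : n ≠ 1 := by rintro rfl; simp at hq
  have hmin : n.minFac ∈ n.primeFactors := Nat.mem_primeFactors.mpr
    ⟨Nat.minFac_prime hn1, n.minFac_dvd, (Nat.mem_primeFactors.mp hq).2.2⟩
  have hpair : {n.minFac, q} ⊆ n.primeFactors := Finset.insert_subset hmin (by simpa using hq)
  calc (1 : ℝ) = (1 - log n.minFac / log x) + log n.minFac / log x := by ring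
    _ ≤ weightTerm x n.minFac n.minFac + weightTerm x n.minFac q := by
        rw [weightTerm_of_lt_sqrt hx.le hqm hqx]
        gcongr
        exact one_sub_log_div_le_weightTerm hx (Or.inl rfl)
    _ = ∑ p ∈ {n.minFac, q}, weightTerm x n.minFac p := (Finset.sum_pair (Ne.symm hqm)).symm
    _ ≤ ∑ p ∈ n.primeFactors, weightTerm x n.minFac p :=
        Finset.sum_le_sum_of_subset_of_nonneg hpair fun p _ _ => weightTerm_nonneg hx _ p

lemma card_sub_le_sum_weightTerm (hx : 1 < x) {lam : ℝ} {n : ℕ} (hn0 : n ≠ 0)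
    (hn : (n : ℝ) ≤ x ^ lam)
    (hlarge : ∀ p ∈ n.primeFactors, p ≠ n.minFac → x ^ ((1 : ℝ) / 2) ≤ p) :
    n.primeFactors.card - lam ≤ ∑ p ∈ n.primeFactors, weightTerm x n.minFac p := by
  have hL := log_pos hx
  have hlogn : log n ≤ lam * log x := by
    rw [← log_rpow (by linarith)]
    exact log_le_log (by exact_mod_cast Nat.pos_of_ne_zero hn0) hn
  have hsum_log : (∑ p ∈ n.primeFactors, log p) / log x ≤ lam :=
    (div_le_iff₀ hL).mpr ((sum_log_primeFactors_le_log n).trans hlogn)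
  calc (n.primeFactors.card : ℝ) - lam
      ≤ n.primeFactors.card - (∑ p ∈ n.primeFactors, log p) / log x := by linarith
    _ = ∑ p ∈ n.primeFactors, (1 - log p / log x) := by
        rw [Finset.sum_sub_distrib, Finset.sum_div, Finset.sum_const, nsmul_one]
    _ ≤ ∑ p ∈ n.primeFactors, weightTerm x n.minFac p :=
        Finset.sum_le_sum fun p hp =>
          one_sub_log_div_le_weightTerm hx ((em (p = n.minFac)).imp_right (hlarge p hp))

end Richert

open Richert in
theorem stmt_0_general (x lam : ℝ) (hx : 2 ≤ x) (hlam1 : 2 ≤ lam) (hlam2 : lam < 3)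
    (n : ℕ) (hn : (n : ℝ) ≤ x ^ lam)
    (w : ℝ)
    (hw : w = 1 - (1 / (3 - lam)) *
      ∑ p ∈ n.primeFactors.filter (fun p : ℕ => (p : ℝ) < x),
        (if p = n.minFac then 1 - Real.log p / Real.log x
         else if (p : ℝ) < x ^ ((1 : ℝ) / 2) then Real.log n.minFac / Real.log x
         else 1 - Real.log p / Real.log x))
    (hpos : 0 < w) :
    n.primeFactors.card ≤ 2 := by
  have hx1 : 1 < x := by linarith
  have hsum_lt : ∑ p ∈ n.primeFactors, weightTerm x n.minFac p < 3 - lam := by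
    rw [hw, Finset.sum_filter, one_div_mul_eq_div, sub_pos, div_lt_one (by linarith)] at hpos
    exact hpos
  by_contra! hcard
  have hn0 : n ≠ 0 := by rintro rfl; simp at hcard
  by_cases hsmall : ∃ q ∈ n.primeFactors, q ≠ n.minFac ∧ (q : ℝ) < x ^ ((1 : ℝ) / 2)
  · obtain ⟨q, hq, hqm, hqx⟩ := hsmall
    linarith [one_le_sum_weightTerm_of_lt_sqrt hx1 hq hqm hqx]
  · push Not at hsmall
    have hcard3 : (3 : ℝ) ≤ n.primeFactors.card := by exact_mod_cast hcard
    linarith [card_sub_le_sum_weightTerm hx1 hn0 hn hsmall]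

/-- **Richert weight detects almost-primes.** If `n ≤ x^λ` is squarefree and the
Richert weight `w(n)` is positive, then `n` has at most two distinct prime factors. -/
theorem stmt_0 (x lam : ℝ) (hx : 2 ≤ x) (hlam1 : 2 ≤ lam) (hlam2 : lam < 3)
    (n : ℕ) (hsf : Squarefree n) (hn : (n : ℝ) ≤ x ^ lam)
    (w : ℝ)
    (hw : w = 1 - (1 / (3 - lam)) *
      ∑ p ∈ n.primeFactors.filter (fun p : ℕ => (p : ℝ) < x),
        (if p = n.minFac then 1 - Real.log p / Real.log x
         else if (p : ℝ) < x ^ ((1 : ℝ) / 2) then Real.log n.minFac / Real.log x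
         else 1 - Real.log p / Real.log x))
    (hpos : 0 < w) :
    n.primeFactors.card ≤ 2 :=
  stmt_0_general x lam hx hlam1 hlam2 n hn w hw hpos
end

section
/- For real $x \geq 2$ and $M$ with $1 \leq M \leq x/2$, $\sum_{1 \leq l < x/M} \log\left(\min\left(2, \frac{x}{lM}\right)\right) = \frac{x}{2M} + O(\log x)$. -/
/-!
With `y = x / M` the summand is `g l` for `g t = min (log 2) (log (y / t))`, which is antitone
in `t`. Comparing the sum with the integral, it lies within `2 log 2` of `∫₀^y g = y / 2`.
-/

open Real MeasureTheory intervalIntegral Set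

/-- For `t > 0` this is `log (min 2 (y / t))`; writing `log y - log t` instead of `log (y / t)`
keeps it antitone on `[0, ∞)`, because `log 0 = 0`. -/
noncomputable def cappedLogRatio (y t : ℝ) : ℝ := min (log 2) (log y - log t)

section cappedLogRatio

variable {y t : ℝ}

lemma log_min_two_div_eq_cappedLogRatio (hy : 0 < y) (ht : 0 < t) :
    log (min 2 (y / t)) = cappedLogRatio y t := by
  rw [cappedLogRatio, ← log_div hy.ne' ht.ne']
  rcases le_total 2 (y / t) with h | h
  · rw [min_eq_left h, min_eq_left (log_le_log two_pos h)]
  · rw [min_eq_right h, min_eq_right (log_le_log (by positivity) h)]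

lemma cappedLogRatio_le_log_two : cappedLogRatio y t ≤ log 2 := min_le_left _ _

lemma cappedLogRatio_eq_log_two (hy : 2 ≤ y) (ht₀ : 0 ≤ t) (ht : t ≤ y / 2) :
    cappedLogRatio y t = log 2 := by
  refine min_eq_left ?_
  rcases ht₀.eq_or_lt with rfl | ht₀
  · rw [log_zero, sub_zero]; exact log_le_log two_pos hy
  · have := log_le_log ht₀ ht
    rw [log_div (by linarith) two_ne_zero] at this
    linarith

lemma cappedLogRatio_eq_log_sub (hy : 0 < y) (ht : y / 2 ≤ t) :
    cappedLogRatio y t = log y - log t := by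
  refine min_eq_right ?_
  have := log_le_log (by positivity) ht
  rw [log_div hy.ne' two_ne_zero] at this
  linarith

lemma cappedLogRatio_nonneg (hy : 1 ≤ y) (ht₀ : 0 ≤ t) (ht : t ≤ y) :
    0 ≤ cappedLogRatio y t := by
  refine le_min (log_nonneg one_le_two) ?_
  rcases ht₀.eq_or_lt with rfl | ht₀
  · simpa using log_nonneg hy
  · linarith [log_le_log ht₀ ht]

lemma neg_log_two_le_cappedLogRatio (hy : 0 < y) (ht : 0 < t) (ht₂ : t ≤ 2 * y) :
    -log 2 ≤ cappedLogRatio y t := by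
  refine le_min (by linarith [log_nonneg one_le_two]) ?_
  have := log_le_log ht ht₂
  rw [log_mul two_ne_zero hy.ne'] at this
  linarith

lemma cappedLogRatio_antitoneOn (hy : 2 ≤ y) : AntitoneOn (cappedLogRatio y) (Ici 0) := by
  intro s hs t _ hst
  rcases (mem_Ici.mp hs).eq_or_lt with rfl | hs
  · rw [cappedLogRatio_eq_log_two hy le_rfl (by linarith)]
    exact cappedLogRatio_le_log_two
  · exact min_le_min le_rfl (by linarith [log_le_log hs hst])

lemma cappedLogRatio_intervalIntegrable (hy : 2 ≤ y) {a b : ℝ} (ha : 0 ≤ a) (hb : 0 ≤ b) :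
    IntervalIntegrable (cappedLogRatio y) volume a b :=
  ((cappedLogRatio_antitoneOn hy).mono
    fun _ ht ↦ mem_Ici.mpr ((le_min ha hb).trans ht.1)).intervalIntegrable

/-- The integral is `(y/2) log 2` over `[0, y/2]`, where the cap is active, plus
`∫_{y/2}^y log (y/t) dt = y/2 - (y/2) log 2`. -/
lemma integral_cappedLogRatio (hy : 2 ≤ y) : ∫ t in (0)..y, cappedLogRatio y t = y / 2 := by
  have hy₀ : 0 < y := by linarith
  have h_cap : ∫ t in (0)..(y / 2), cappedLogRatio y t = y / 2 * log 2 := by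
    rw [integral_congr (g := fun _ ↦ log 2) fun t ht ↦ by
      rw [uIcc_of_le (by positivity)] at ht
      exact cappedLogRatio_eq_log_two hy ht.1 ht.2]
    simp
  have h_log : ∫ t in (y / 2)..y, cappedLogRatio y t = y / 2 - y / 2 * log 2 := by
    rw [integral_congr (g := fun t ↦ log y - log t) fun t ht ↦ by
      rw [uIcc_of_le (by linarith)] at ht
      exact cappedLogRatio_eq_log_sub hy₀ ht.1]
    rw [integral_sub intervalIntegrable_const intervalIntegrable_log',
      intervalIntegral.integral_const, integral_log, log_div hy₀.ne' two_ne_zero, smul_eq_mul]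
    ring
  rw [← integral_add_adjacent_intervals (b := y / 2)
    (cappedLogRatio_intervalIntegrable hy le_rfl (by positivity))
    (cappedLogRatio_intervalIntegrable hy (by positivity) hy₀.le), h_cap, h_log]
  ring

lemma sum_Ico_cappedLogRatio_le (hy : 2 ≤ y) :
    ∑ l ∈ Finset.Ico 1 ⌈y⌉₊, cappedLogRatio y l ≤ y / 2 := by
  have hN : 1 ≤ ⌈y⌉₊ := Nat.one_le_ceil_iff.mpr (by linarith)
  have hNy : ((⌈y⌉₊ - 1 : ℕ) : ℝ) ≤ y := by
    rw [Nat.cast_sub hN, Nat.cast_one]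
    linarith [Nat.ceil_lt_add_one (by linarith : 0 ≤ y)]
  have h_sum := AntitoneOn.sum_le_integral_Ico (Nat.zero_le (⌈y⌉₊ - 1))
    ((cappedLogRatio_antitoneOn hy).mono fun t ht ↦ by simpa using ht.1)
  rw [Finset.sum_Ico_add' (fun l : ℕ ↦ cappedLogRatio y l), Nat.sub_add_cancel hN,
    Nat.cast_zero] at h_sum
  have h_tail : 0 ≤ ∫ t in ((⌈y⌉₊ - 1 : ℕ) : ℝ)..y, cappedLogRatio y t :=
    integral_nonneg hNy fun t ht ↦
      cappedLogRatio_nonneg (by linarith) ((Nat.cast_nonneg _).trans ht.1) ht.2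
  rw [← integral_cappedLogRatio hy, ← integral_add_adjacent_intervals
    (cappedLogRatio_intervalIntegrable hy le_rfl (Nat.cast_nonneg _))
    (cappedLogRatio_intervalIntegrable hy (Nat.cast_nonneg _) (by linarith))]
  linarith

lemma sub_two_mul_log_two_le_sum_Ico_cappedLogRatio (hy : 2 ≤ y) :
    y / 2 - 2 * log 2 ≤ ∑ l ∈ Finset.Ico 1 ⌈y⌉₊, cappedLogRatio y l := by
  have hy₀ : 0 < y := by linarith
  have hN : 1 ≤ ⌈y⌉₊ := Nat.one_le_ceil_iff.mpr hy₀
  have hyN : y ≤ ⌈y⌉₊ := Nat.le_ceil y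
  have hNy : (⌈y⌉₊ : ℝ) < y + 1 := Nat.ceil_lt_add_one hy₀.le
  have h_sum := AntitoneOn.integral_le_sum_Ico hN
    ((cappedLogRatio_antitoneOn hy).mono fun t ht ↦ mem_Ici.mpr (zero_le_one.trans (by simpa using ht.1)))
  rw [Nat.cast_one] at h_sum
  have h_head : ∫ t in (0)..1, cappedLogRatio y t ≤ log 2 := by
    simpa using integral_mono_on zero_le_one
      (cappedLogRatio_intervalIntegrable hy le_rfl zero_le_one) intervalIntegrable_const
      fun t _ ↦ cappedLogRatio_le_log_two
  have h_tail : -log 2 ≤ ∫ t in y..⌈y⌉₊, cappedLogRatio y t := by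
    have := integral_mono_on hyN intervalIntegrable_const
      (cappedLogRatio_intervalIntegrable hy hy₀.le (Nat.cast_nonneg _))
      fun t ht ↦ neg_log_two_le_cappedLogRatio hy₀ (hy₀.trans_le ht.1) (by linarith [ht.2])
    rw [intervalIntegral.integral_const, smul_eq_mul] at this
    nlinarith [log_nonneg one_le_two]
  have h_split₁ := integral_add_adjacent_intervals
    (cappedLogRatio_intervalIntegrable hy le_rfl zero_le_one)
    (cappedLogRatio_intervalIntegrable hy zero_le_one (Nat.cast_nonneg ⌈y⌉₊))
  have h_split₂ := integral_add_adjacent_intervals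
    (cappedLogRatio_intervalIntegrable hy le_rfl hy₀.le)
    (cappedLogRatio_intervalIntegrable hy hy₀.le (Nat.cast_nonneg ⌈y⌉₊))
  linarith [integral_cappedLogRatio hy]

end cappedLogRatio

theorem abs_sum_Ico_log_min_two_div_sub_le {y : ℝ} (hy : 2 ≤ y) :
    |∑ l ∈ Finset.Ico 1 ⌈y⌉₊, log (min 2 (y / l)) - y / 2| ≤ 2 * log 2 := by
  rw [Finset.sum_congr rfl fun l hl ↦ log_min_two_div_eq_cappedLogRatio (by linarith)
    (by exact_mod_cast (Finset.mem_Ico.mp hl).1), abs_le]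
  constructor <;>
    linarith [sum_Ico_cappedLogRatio_le hy, sub_two_mul_log_two_le_sum_Ico_cappedLogRatio hy,
      log_nonneg one_le_two]

/-- `∑_{1 ≤ l < x/M} log(min(2, x/(lM))) = x/(2M) + O(log x)` for `2 ≤ x`,
`1 ≤ M ≤ x/2`. -/
theorem stmt_14 : ∃ K : ℝ, ∀ x M : ℝ, 2 ≤ x → 1 ≤ M → M ≤ x / 2 →
    |(∑ l ∈ Finset.Ico 1 ⌈x / M⌉₊, Real.log (min 2 (x / (l * M)))) - x / (2 * M)|
      ≤ K * Real.log x := by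
  refine ⟨2, fun x M hx hM hMx ↦ ?_⟩
  have hy : 2 ≤ x / M := by rw [le_div_iff₀ (by linarith)]; linarith
  have h_div (c : ℝ) : x / (c * M) = x / M / c := by rw [div_div, mul_comm]
  simp only [h_div]
  exact (abs_sum_Ico_log_min_two_div_sub_le hy).trans
    (mul_le_mul_of_nonneg_left (log_le_log two_pos hx) zero_le_two)
end
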